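/- arXiv:math/9705214 — 7 statements merged into one kernel-verified Lean document; each statement's English description precedes it below -/
import Mathlib

section
/- Let m be a natural number and let x, y, z : Fin m → ℚ be three pairwise distinct points such that each of x, y, z is a vertex of the standard m-cube and moreover the sum of the coordinates of each of x, y, z equals 1 or -1. Then x, y, z do not lie on a common affine line, i.e. ¬ Collinear ℚ {x, y, z}. -/
/-!
Distinct vertices `x ≠ y` of the cube differ in some coordinate `i`, and since every vertex
coordinate is `±1`, a third vertex `z` agrees at `i` with `x` or with `y`. Along an affine line
a linear functional that separates two points is injective, so `z = x` or `z = y`.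
-/

theorem eq_or_eq_of_ne_of_eq_or_eq {α : Type*} {p q a b c : α}
    (ha : a = p ∨ a = q) (hb : b = p ∨ b = q) (hc : c = p ∨ c = q) (hab : a ≠ b) :
    c = a ∨ c = b := by
  rcases ha with rfl | rfl <;> rcases hb with rfl | rfl <;> rcases hc with rfl | rfl <;>
    simp_all

theorem Collinear.eq_of_map_eq {K M N : Type*} [Field K] [AddCommGroup M] [Module K M]
    [AddCommGroup N] [Module K N] {x y z : M} (h : Collinear K {x, y, z}) (f : M →ₗ[K] N)
    (hxy : f x ≠ f y) (hzx : f z = f x) : z = x := by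
  obtain ⟨v, hv⟩ := (collinear_iff_of_mem (Set.mem_insert x _)).1 h
  obtain ⟨a, rfl⟩ := hv y (by simp)
  obtain ⟨b, rfl⟩ := hv z (by simp)
  have hfv : f v ≠ 0 := fun h0 => hxy (by simp [h0])
  have hb : b = 0 := (smul_eq_zero.1 (by simpa using hzx)).resolve_right hfv
  simp [hb]

theorem cube_vertices_sum_pm_one_not_collinear_general (m : ℕ) (x y z : Fin m → ℚ)
    (hx : ∀ i, x i = 1 ∨ x i = -1)
    (hy : ∀ i, y i = 1 ∨ y i = -1)
    (hz : ∀ i, z i = 1 ∨ z i = -1)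
    (hxy : x ≠ y) (hxz : x ≠ z) (hyz : y ≠ z) :
    ¬ Collinear ℚ ({x, y, z} : Set (Fin m → ℚ)) := by
  intro h
  obtain ⟨i, hi⟩ := Function.ne_iff.1 hxy
  have h' : Collinear ℚ ({y, x, z} : Set (Fin m → ℚ)) := by rwa [Set.insert_comm]
  rcases eq_or_eq_of_ne_of_eq_or_eq (hx i) (hy i) (hz i) hi with hzi | hzi
  · exact hxz (h.eq_of_map_eq (LinearMap.proj i) hi hzi).symm
  · exact hyz (h'.eq_of_map_eq (LinearMap.proj i) (Ne.symm hi) hzi).symm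

theorem cube_vertices_sum_pm_one_not_collinear (m : ℕ) (x y z : Fin m → ℚ)
    (hx : ∀ i, x i = 1 ∨ x i = -1)
    (hy : ∀ i, y i = 1 ∨ y i = -1)
    (hz : ∀ i, z i = 1 ∨ z i = -1)
    (hxs : (∑ i, x i) = 1 ∨ (∑ i, x i) = -1)
    (hys : (∑ i, y i) = 1 ∨ (∑ i, y i) = -1)
    (hzs : (∑ i, z i) = 1 ∨ (∑ i, z i) = -1)
    (hxy : x ≠ y) (hxz : x ≠ z) (hyz : y ≠ z) :
    ¬ Collinear ℚ ({x, y, z} : Set (Fin m → ℚ)) :=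
  cube_vertices_sum_pm_one_not_collinear_general m x y z hx hy hz hxy hxz hyz
end

section
/- Let m be a natural number and let x, y, z : Fin m → ℚ be three pairwise distinct points such that each of x, y, z is a vertex of the standard m-cube and moreover for each of x, y, z the number of indices i with coordinate equal to -1 is even. Then x, y, z do not lie on a common affine line, i.e. ¬ Collinear ℚ {x, y, z}. -/
theorem half_spin_cube_vertices_not_collinear (m : ℕ) (x y z : Fin m → ℚ)
    (hx : ∀ i, x i = 1 ∨ x i = -1)
    (hy : ∀ i, y i = 1 ∨ y i = -1)
    (hz : ∀ i, z i = 1 ∨ z i = -1)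
    (hxe : Even (Finset.univ.filter (fun i => x i = -1)).card)
    (hye : Even (Finset.univ.filter (fun i => y i = -1)).card)
    (hze : Even (Finset.univ.filter (fun i => z i = -1)).card)
    (hxy : x ≠ y) (hxz : x ≠ z) (hyz : y ≠ z) :
    ¬ Collinear ℚ ({x, y, z} : Set (Fin m → ℚ)) := by
  intro hc
  rw [collinear_iff_of_mem (Set.mem_insert x _)] at hc
  obtain ⟨d, hd⟩ := hc
  obtain ⟨a, ha⟩ := hd y (by simp)
  obtain ⟨b, hb⟩ := hd z (by simp)
  obtain ⟨i, hi⟩ := Function.ne_iff.mp hxy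
  have hyi : y i = a * d i + x i := by rw [ha]; simp
  have hzi : z i = b * d i + x i := by rw [hb]; simp
  have hadi : a * d i ≠ 0 := by
    intro h; apply hi; rw [hyi, h, zero_add]
  have hdi : d i ≠ 0 := fun h => hadi (by rw [h, mul_zero])
  -- z i is x i or y i
  have hzx : z i = x i ∨ z i = y i := by
    rcases hz i with h | h <;> rcases hx i with h' | h' <;>
      rcases hy i with h'' | h'' <;> simp_all
  rcases hzx with h | h
  · have hb0 : b = 0 := by
      have : b * d i = 0 := by
        have := hzi; rw [h] at this; linarith
      exact (mul_eq_zero.mp this).resolve_right hdi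
    apply hxz
    rw [hb, hb0, zero_smul, zero_vadd]
  · have hba : b = a := by
      have : b * d i = a * d i := by
        have := hzi; rw [h, hyi] at this; linarith
      exact mul_right_cancel₀ hdi this
    apply hyz
    rw [ha, hb, hba]
end

section
/- Let G be a commutative group and α : Fin m → G a multiplicatively independent family. Let a, b, c : Fin m → ℤ be sign vectors. If (∏ i, (α i) ^ (b i))² = (∏ i, (α i) ^ (a i)) * (∏ i, (α i) ^ (c i)), then a = b and c = b; in particular the three group elements ∏ i, (α i) ^ (a i), ∏ i, (α i) ^ (b i), ∏ i, (α i) ^ (c i) are all equal. -/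
theorem mult_indep_cube_midpoint {G : Type*} [CommGroup G] (m : ℕ) (α : Fin m → G)
    (hindep : ∀ e : Fin m → ℤ, (∏ i, (α i) ^ (e i)) = 1 → e = 0)
    (a b c : Fin m → ℤ)
    (ha : ∀ i, a i = 1 ∨ a i = -1)
    (hb : ∀ i, b i = 1 ∨ b i = -1)
    (hc : ∀ i, c i = 1 ∨ c i = -1)
    (h : (∏ i, (α i) ^ (b i)) ^ 2 = (∏ i, (α i) ^ (a i)) * (∏ i, (α i) ^ (c i))) :
    a = b ∧ c = b := by
  have key : (fun i => 2 * b i - a i - c i) = 0 := by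
    apply hindep
    have : (∏ i, (α i) ^ (2 * b i - a i - c i)) =
        ((∏ i, (α i) ^ (b i)) ^ 2) * ((∏ i, (α i) ^ (a i)) * (∏ i, (α i) ^ (c i)))⁻¹ := by
      rw [← Finset.prod_pow, mul_inv, ← Finset.prod_inv_distrib, ← Finset.prod_inv_distrib,
        ← Finset.prod_mul_distrib, ← Finset.prod_mul_distrib]
      refine Finset.prod_congr rfl fun i _ => ?_
      rw [← zpow_natCast ((α i) ^ (b i)) 2, ← zpow_mul, ← zpow_neg, ← zpow_neg, ← zpow_add,
        ← zpow_add]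
      ring_nf
    rw [this, h, mul_inv_cancel]
  have key' : ∀ i, 2 * b i - a i - c i = 0 := fun i => congrFun key i
  constructor <;> funext i <;>
    · have := key' i
      rcases ha i with h1 | h1 <;> rcases hb i with h2 | h2 <;> rcases hc i with h3 | h3 <;>
        omega
end

section
/- Let G be a commutative group and α : Fin m → G a multiplicatively independent family. Let x = (α j) ^ s, y = (α k) ^ t, z = (α r) ^ u, where j, k, r : Fin m and s, t, u ∈ {1, -1} ⊆ ℤ. If y² = x * z, then x = y = z (equivalently j = k = r and s = t = u). -/
theorem mult_indep_standard_midpoint {G : Type*} [CommGroup G] (m : ℕ) (α : Fin m → G)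
    (hindep : ∀ e : Fin m → ℤ, (∏ i, (α i) ^ (e i)) = 1 → e = 0)
    (j k r : Fin m) (s t u : ℤ)
    (hs : s = 1 ∨ s = -1) (ht : t = 1 ∨ t = -1) (hu : u = 1 ∨ u = -1)
    (x y z : G)
    (hx : x = (α j) ^ s) (hy : y = (α k) ^ t) (hz : z = (α r) ^ u)
    (h : y ^ 2 = x * z) :
    x = y ∧ y = z := by
  set e : Fin m → ℤ := fun i =>
    (if i = k then 2 * t else 0) - (if i = j then s else 0) - (if i = r then u else 0) with he
  have hprod : (∏ i, (α i) ^ (e i)) = 1 := by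
    have h1 : (∏ i, (α i) ^ (e i)) =
        (∏ i, (α i) ^ (if i = k then 2 * t else 0)) *
        (∏ i, (α i) ^ (if i = j then s else 0))⁻¹ *
        (∏ i, (α i) ^ (if i = r then u else 0))⁻¹ := by
      rw [← Finset.prod_inv_distrib, ← Finset.prod_inv_distrib,
        ← Finset.prod_mul_distrib, ← Finset.prod_mul_distrib]
      refine Finset.prod_congr rfl fun i _ => ?_
      rw [he]
      rw [zpow_sub, zpow_sub]
    have h2 : ∀ (w : Fin m) (c : ℤ), (∏ i, (α i) ^ (if i = w then c else 0)) = (α w) ^ c := by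
      intro w c
      rw [Finset.prod_congr rfl (fun i _ => apply_ite (α i ^ ·) (i = w) c 0)]
      simp [Finset.prod_ite_eq']
    rw [h1, h2, h2, h2]
    have : (α k) ^ (2 * t) = y ^ 2 := by
      rw [hy, ← zpow_natCast (α k ^ t) 2, ← zpow_mul, mul_comm]
      norm_num
    rw [this, h, hx, hz]
    simp [zpow_neg, mul_comm, mul_assoc, mul_left_comm]
  have he0 := hindep e hprod
  have hk := congrFun he0 k
  have hj := congrFun he0 j
  have hr := congrFun he0 r
  simp only [he, Pi.zero_apply, eq_self_iff_true, if_true] at hk hj hr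
  -- At k: 2t - [k=j]s - [k=r]u = 0; since s,u,t ∈ {±1}, forces k=j, k=r, s=u=t
  by_cases hkj : k = j
  · by_cases hkr : k = r
    · simp only [if_pos hkj, if_pos hkr] at hk
      have hst : s = t ∧ u = t := by
        rcases hs with h|h <;> rcases ht with h'|h' <;> rcases hu with h''|h'' <;>
          subst h <;> subst h' <;> subst h'' <;> omega
      subst hkj
      constructor
      · rw [hx, hy, hst.1]
      · rw [hy, hz, ← hkr, hst.2]
    · simp only [if_pos hkj, if_neg hkr] at hk
      rcases hs with h|h <;> rcases ht with h'|h' <;> exfalso <;> omega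
  · simp only [if_neg hkj] at hk
    by_cases hkr : k = r
    · simp only [if_pos hkr] at hk
      rcases hu with h|h <;> rcases ht with h'|h' <;> exfalso <;> omega
    · simp only [if_neg hkr] at hk
      rcases ht with h'|h' <;> exfalso <;> omega
end

section
/- Let G be a commutative group, λ ∈ G, Γ₁ ≤ G a subgroup, and β : Fin n → G a family such that for every k : ℤ, every γ ∈ Γ₁ and every f : Fin n → ℤ, the relation λ ^ k * γ * ∏ j, (β j) ^ (f j) = 1 implies k = 0, γ = 1 and f = 0. Let Δ₁ ⊆ Γ₁ and set Δ = {λ * d * ∏ j, (β j) ^ (b j) : d ∈ Δ₁, b a sign vector}. If x, y, z ∈ Δ satisfy y² = x * z, then x, y, z have the same β-component: there exist a sign vector b and elements d', d, d'' ∈ Δ₁ with x = λ * d' * ∏ j, (β j) ^ (b j), y = λ * d * ∏ j, (β j) ^ (b j), and z = λ * d'' * ∏ j, (β j) ^ (b j). -/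
theorem frobenius_eigenvalues_common_component {G : Type*} [CommGroup G] (n : ℕ)
    (lam : G) (Γ₁ : Subgroup G) (β : Fin n → G)
    (hindep : ∀ (k : ℤ) (γ : G), γ ∈ Γ₁ → ∀ f : Fin n → ℤ,
      lam ^ k * γ * (∏ j, (β j) ^ (f j)) = 1 → k = 0 ∧ γ = 1 ∧ f = 0)
    (Δ₁ : Set G) (hΔ₁ : Δ₁ ⊆ (Γ₁ : Set G))
    (Δ : Set G)
    (hΔ : Δ = {w | ∃ d ∈ Δ₁, ∃ b : Fin n → ℤ,
      (∀ j, b j = 1 ∨ b j = -1) ∧ w = lam * d * ∏ j, (β j) ^ (b j)})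
    (x y z : G) (hx : x ∈ Δ) (hy : y ∈ Δ) (hz : z ∈ Δ)
    (h : y ^ 2 = x * z) :
    ∃ b : Fin n → ℤ, (∀ j, b j = 1 ∨ b j = -1) ∧
      ∃ d' ∈ Δ₁, ∃ d ∈ Δ₁, ∃ d'' ∈ Δ₁,
        x = lam * d' * ∏ j, (β j) ^ (b j) ∧
        y = lam * d * ∏ j, (β j) ^ (b j) ∧
        z = lam * d'' * ∏ j, (β j) ^ (b j) := by
  subst hΔ
  obtain ⟨dx, hdx, bx, hbx, hxe⟩ := hx
  obtain ⟨dy, hdy, by_, hby, hye⟩ := hy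
  obtain ⟨dz, hdz, bz, hbz, hze⟩ := hz
  have key : lam ^ (0 : ℤ) * (dy ^ 2 * (dx * dz)⁻¹) *
      (∏ j, (β j) ^ ((fun j => 2 * by_ j - bx j - bz j) j)) = 1 := by
    have hprod : ∀ j, (β j) ^ (2 * by_ j - bx j - bz j)
        = ((β j) ^ (by_ j)) ^ 2 * (((β j) ^ (bx j)) * ((β j) ^ (bz j)))⁻¹ := by
      intro j
      rw [← zpow_natCast ((β j) ^ (by_ j)) 2, ← zpow_mul, ← zpow_add, ← zpow_sub]
      ring_nf
    simp only [hprod]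
    rw [Finset.prod_mul_distrib, Finset.prod_inv_distrib, Finset.prod_mul_distrib,
      Finset.prod_pow]
    have h2 : (lam * dy * ∏ j, (β j) ^ (by_ j)) ^ 2
        = (lam * dx * ∏ j, (β j) ^ (bx j)) * (lam * dz * ∏ j, (β j) ^ (bz j)) := by
      rw [← hxe, ← hye, ← hze]; exact h
    have e1 : (lam * dy * ∏ j, (β j) ^ (by_ j)) ^ 2
        = lam ^ 2 * (dy ^ 2 * (∏ j, (β j) ^ (by_ j)) ^ 2) := by
      rw [mul_pow, mul_pow, mul_assoc]
    have e2 : (lam * dx * ∏ j, (β j) ^ (bx j)) * (lam * dz * ∏ j, (β j) ^ (bz j))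
        = lam ^ 2 * ((dx * dz) * ((∏ j, (β j) ^ (bx j)) * ∏ j, (β j) ^ (bz j))) := by
      simp [sq, mul_assoc, mul_comm, mul_left_comm]
    rw [e1, e2] at h2
    have h4 := mul_left_cancel h2
    rw [zpow_zero, one_mul, mul_mul_mul_comm, h4, mul_mul_mul_comm]
    group
  obtain ⟨-, hγ, hf⟩ := hindep 0 _ (mul_mem (pow_mem (hΔ₁ hdy) 2)
    (inv_mem (mul_mem (hΔ₁ hdx) (hΔ₁ hdz)))) _ key
  have hb : ∀ j, bx j = by_ j ∧ bz j = by_ j := by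
    intro j
    have h0 : 2 * by_ j - bx j - bz j = 0 := congrFun hf j
    rcases hbx j with h1 | h1 <;> rcases hby j with h2 | h2 <;>
      rcases hbz j with h3 | h3 <;> omega
  refine ⟨by_, hby, dx, hdx, dy, hdy, dz, hdz, ?_, hye, ?_⟩
  · rw [hxe]; congr 1; exact Finset.prod_congr rfl fun j _ => by rw [(hb j).1]
  · rw [hze]; congr 1; exact Finset.prod_congr rfl fun j _ => by rw [(hb j).2]
end

section
/- Let G be a torsion-free commutative group, λ ∈ G, and Δ₁, Δ₂ finite nonempty symmetric subsets of G (i.e. {d⁻¹ : d ∈ Δᵢ} = Δᵢ for i = 1, 2). Set Δ = {λ * d₁ * d₂ : d₁ ∈ Δ₁, d₂ ∈ Δ₂}. Then for η ∈ G one has {η * δ⁻¹ : δ ∈ Δ} = Δ if and only if η = λ². -/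
/-!
With `S = Δ₁ * Δ₂`, which is symmetric, we have `Δ = λ • S` and `η • Δ⁻¹ = (η λ⁻¹) • S`, so the
condition says that `η λ⁻²` stabilises the finite nonempty set `S`. Such a stabiliser is a finite
subgroup, hence trivial in a torsion-free group.
-/

open Pointwise

theorem IsMulTorsionFree.of_pow_eq_one {G : Type*} [CommGroup G]
    (h : ∀ g : G, ∀ k : ℕ, 0 < k → g ^ k = 1 → g = 1) : IsMulTorsionFree G :=
  .of_not_isOfFinOrder fun g hg hfin =>
    let ⟨k, hk, hgk⟩ := isOfFinOrder_iff_pow_eq_one.1 hfin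
    hg (h g k hk hgk)

namespace Finset

variable {G : Type*} [DecidableEq G]

theorem smul_finset_eq_self_iff [Group G] [IsMulTorsionFree G] {s : Finset G} (hs : s.Nonempty)
    {c : G} : c • s = s ↔ c = 1 := by
  refine ⟨fun h => ?_, fun h => h ▸ one_smul G s⟩
  set H := MulAction.stabilizer G (s : Set G)
  have hc : c ∈ H := by
    rw [MulAction.mem_stabilizer_iff, ← coe_smul_finset, h]
  have : Finite H := (MulAction.stabilizer_finite (by simpa using hs) s.finite_toSet).to_subtype
  exact (isOfFinOrder_iff_eq_one c).1 <|
    H.subtype.isOfFinOrder (x := ⟨c, hc⟩) (isOfFinOrder_of_finite _)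

theorem smul_inv_smul_finset_eq_self_iff_eq_sq [CommGroup G] [IsMulTorsionFree G] {s : Finset G}
    (hs : s.Nonempty) (hsym : s⁻¹ = s) (a η : G) : η • (a • s)⁻¹ = a • s ↔ η = a ^ 2 := by
  calc η • (a • s)⁻¹ = a • s ↔ a⁻¹ • η • (a • s)⁻¹ = s := inv_smul_eq_iff.symm
    _ ↔ (a⁻¹ * η * a⁻¹) • s = s := by
      rw [inv_smul_finset_distrib, hsym, op_smul_eq_smul, smul_smul, smul_smul]
    _ ↔ η = a ^ 2 := by
      rw [smul_finset_eq_self_iff hs, mul_inv_eq_one, inv_mul_eq_iff_eq_mul, pow_two]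

end Finset

theorem translate_inv_eq_self_iff_lambda_sq {G : Type*} [CommGroup G] [DecidableEq G]
    (htf : ∀ g : G, ∀ k : ℕ, 0 < k → g ^ k = 1 → g = 1)
    (lam : G) (Δ₁ Δ₂ : Finset G) (hΔ₁ : Δ₁.Nonempty) (hΔ₂ : Δ₂.Nonempty)
    (hΔ₁sym : Δ₁.image (fun d => d⁻¹) = Δ₁)
    (hΔ₂sym : Δ₂.image (fun d => d⁻¹) = Δ₂)
    (Δ : Finset G)
    (hΔ : Δ = (Δ₁ ×ˢ Δ₂).image (fun p => lam * p.1 * p.2))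
    (η : G) :
    Δ.image (fun δ => η * δ⁻¹) = Δ ↔ η = lam ^ 2 := by
  have := IsMulTorsionFree.of_pow_eq_one htf
  have hsym : (Δ₁ * Δ₂)⁻¹ = Δ₁ * Δ₂ := by
    rw [mul_inv, ← Finset.image_inv_eq_inv, ← Finset.image_inv_eq_inv, hΔ₁sym, hΔ₂sym]
  have hΔ_eq : Δ = lam • (Δ₁ * Δ₂) := by
    rw [hΔ, ← Finset.image_mul_product, ← Finset.image_smul, Finset.image_image]
    simp only [Function.comp_def, smul_eq_mul, mul_assoc]
  have himage : Δ.image (fun δ => η * δ⁻¹) = η • Δ⁻¹ := by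
    rw [← Finset.image_inv_eq_inv, ← Finset.image_smul, Finset.image_image]
    rfl
  rw [himage, hΔ_eq]
  exact Finset.smul_inv_smul_finset_eq_self_iff_eq_sq (hΔ₁.mul hΔ₂) hsym lam η
end

section
/- Let l and p be distinct prime numbers, n a natural number, k a field, and ζ ∈ k a primitive (l^n)-th root of unity (IsPrimitiveRoot ζ (l^n)). If there exists a ring homomorphism from k to the field ℚ_[p] of p-adic numbers, then l^n divides p - 1. -/
theorem primitive_root_embeds_padic_dvd (l p : ℕ) (hl : l.Prime) (hp : Fact p.Prime)
    (hlp : l ≠ p) (n : ℕ) (k : Type*) [Field k] (ζ : k)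
    (hζ : IsPrimitiveRoot ζ (l ^ n))
    (hemb : Nonempty (k →+* ℚ_[p])) :
    l ^ n ∣ p - 1 := by
  obtain ⟨φ⟩ := hemb
  set m := l ^ n with hm
  have hm0 : m ≠ 0 := pow_ne_zero _ hl.ne_zero
  have hξ : IsPrimitiveRoot (φ ζ) m := hζ.map_of_injective φ.injective
  have hpow : (φ ζ) ^ m = 1 := hξ.pow_eq_one
  have hnorm : ‖φ ζ‖ ≤ 1 := by
    have h1 : ‖φ ζ‖ ^ m = 1 := by rw [← norm_pow, hpow, norm_one]
    by_contra h
    push_neg at h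
    have := one_lt_pow₀ h hm0
    rw [h1] at this
    exact lt_irrefl 1 this
  set a : ℤ_[p] := ⟨φ ζ, hnorm⟩ with ha
  have ham : a ^ m = 1 := by
    apply Subtype.ext
    push_cast [ha]
    exact hpow
  have haprim : IsPrimitiveRoot a m := by
    refine ⟨ham, fun i hi => ?_⟩
    apply hξ.dvd_of_pow_eq_one
    have : ((a ^ i : ℤ_[p]) : ℚ_[p]) = ((1 : ℤ_[p]) : ℚ_[p]) := by rw [hi]
    push_cast [ha] at this
    exact this
  -- p does not divide m
  have hpm : ¬ (p : ZMod p) = 0 → True := fun _ => trivial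
  have hmne : (m : ZMod p) ≠ 0 := by
    rw [Ne, ZMod.natCast_eq_zero_iff]
    intro hdvd
    rcases (Nat.Prime.dvd_of_dvd_pow hp.out hdvd) with h
    exact hlp ((Nat.prime_dvd_prime_iff_eq hp.out hl).mp h).symm
  -- key: if b : ℤ_[p], b ^ m = 1, toZMod b = 1 then b = 1
  have key : ∀ b : ℤ_[p], b ^ m = 1 → PadicInt.toZMod b = 1 → b = 1 := by
    intro b hb hb1
    have hgeom : (∑ i ∈ Finset.range m, b ^ i) * (b - 1) = 0 := by
      rw [geom_sum_mul, hb, sub_self]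
    have hS : IsUnit (∑ i ∈ Finset.range m, b ^ i) := by
      by_contra hS
      have hmem : (∑ i ∈ Finset.range m, b ^ i) ∈ IsLocalRing.maximalIdeal ℤ_[p] :=
        hS
      rw [← PadicInt.ker_toZMod, RingHom.mem_ker] at hmem
      apply hmne
      rw [← hmem, map_sum]
      simp [map_pow, hb1]
    have : b - 1 = 0 := by
      rcases hS with ⟨u, hu⟩
      have := congrArg (fun x => (↑u⁻¹ : ℤ_[p]) * x) hgeom
      simpa [← hu, ← mul_assoc] using this
    exact sub_eq_zero.mp this
  -- image in ZMod p
  set c : ZMod p := PadicInt.toZMod a with hc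
  have hcm : c ^ m = 1 := by rw [hc, ← map_pow, ham, map_one]
  have hc0 : c ≠ 0 := by
    intro h
    rw [h, zero_pow hm0] at hcm
    exact zero_ne_one hcm
  have hck : c ^ (p - 1) = 1 := ZMod.pow_card_sub_one_eq_one hc0
  have hdvd : m ∣ orderOf c := by
    apply haprim.dvd_of_pow_eq_one
    apply key
    · rw [← pow_mul, mul_comm, pow_mul, ham, one_pow]
    · rw [map_pow, ← hc, pow_orderOf_eq_one]
  exact hdvd.trans (orderOf_dvd_of_pow_eq_one hck)
end
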